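/- arXiv:1408.1442 — 4 statements merged into one kernel-verified Lean document; each statement's English description precedes it below -/
import Mathlib

section
/- Let Z be a separable Hilbert space with orthonormal basis (φ_{nj})_{n≥1, 1≤j≤r_n}, let μ_n be real numbers with sup_n μ_n < ∞, and let S(t) be the diagonal semigroup S(t)x = Σ_n e^{μ_n t} Σ_j ⟨x,φ_{nj}⟩φ_{nj}. Let g_1,…,g_p ∈ Z and define B*: Z → ℝ^p by (B*z)_i = ⟨z, g_i⟩. Assume the μ_n are pairwise distinct. Then B*S(t)*x = 0 for all t ≥ 0 if and only if ⟨E(μ_n)x, g_i⟩ = 0 for all n ≥ 1 and all i = 1,…,p, where E(μ_n)x = Σ_{j=1}^{r_n} ⟨x, φ_{nj}⟩ φ_{nj} is the spectral projection. -/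
/-!
Pairing `S(t)x` with `g_i` and grouping the Hilbert basis expansion by eigenvalue gives the
Dirichlet series `⟪S(t)x, g_i⟫ = ∑ₙ ⟪E(μₙ)x, g_i⟫ e^{μₙ t}`, with absolutely summable
coefficients. At `t = k ∈ ℕ` this is the `k`-th moment of the atomic measure
`∑ₙ ⟪E(μₙ)x, g_i⟫ δ_{xₙ}` with distinct atoms `xₙ = e^{μₙ - sup μ} ∈ (0, 1]`, and such a measure
is determined by its moments: polynomials `(1 - (X - xₘ)² / D)ᵏ` tend to the indicator of `xₘ`
on the atoms, so dominated convergence isolates the `m`-th coefficient.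
-/

open Filter Topology Polynomial
open scoped RealInnerProductSpace

section Moments

variable {ι : Type*} {c x : ι → ℝ} {R : ℝ}

lemma summable_mul_pow_of_abs_le (hc : Summable c) (hx : ∀ n, |x n| ≤ R) (k : ℕ) :
    Summable fun n => c n * x n ^ k := by
  refine (hc.abs.mul_right (R ^ k)).of_norm_bounded fun n => ?_
  rw [Real.norm_eq_abs, abs_mul, abs_pow]
  exact mul_le_mul_of_nonneg_left (pow_le_pow_left₀ (abs_nonneg _) (hx n) k) (abs_nonneg _)

lemma tsum_mul_eval_eq_zero_of_moments (hc : Summable c) (hx : ∀ n, |x n| ≤ R)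
    (hmom : ∀ k : ℕ, ∑' n, c n * x n ^ k = 0) (P : ℝ[X]) :
    ∑' n, c n * P.eval (x n) = 0 := by
  simp_rw [eval_eq_sum_range, Finset.mul_sum, mul_left_comm (c _)]
  rw [Summable.tsum_finsetSum fun k _ => (summable_mul_pow_of_abs_le hc hx k).mul_left _]
  simp_rw [tsum_mul_left, hmom, mul_zero, Finset.sum_const_zero]

theorem eq_zero_of_tsum_mul_pow_eq_zero (hc : Summable c) (hx : ∀ n, |x n| ≤ R)
    (hinj : Function.Injective x) (hmom : ∀ k : ℕ, ∑' n, c n * x n ^ k = 0) : c = 0 := by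
  classical
  ext m
  rw [Pi.zero_apply]
  set D : ℝ := 4 * R ^ 2 + 1
  set q : ι → ℝ := fun n => 1 - (x n - x m) ^ 2 / D
  have hD : 0 < D := by positivity
  have hq_nonneg : ∀ n, 0 ≤ q n := fun n => by
    have : (x n - x m) ^ 2 ≤ D := by
      have := abs_le.mp (hx n); have := abs_le.mp (hx m); nlinarith
    simp only [q, sub_nonneg, div_le_one hD, this]
  have hq_le_one : ∀ n, q n ≤ 1 := fun n => by
    simp only [q]; linarith [div_nonneg (sq_nonneg (x n - x m)) hD.le]
  have hq_lt_one : ∀ n, n ≠ m → q n < 1 := fun n hn => by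
    have : 0 < (x n - x m) ^ 2 := by
      simpa [sq_pos_iff, sub_ne_zero] using hinj.ne hn
    simp only [q]; linarith [div_pos this hD]
  have hzero : ∀ k : ℕ, ∑' n, c n * q n ^ k = 0 := fun k => by
    have := tsum_mul_eval_eq_zero_of_moments hc hx hmom ((1 - C D⁻¹ * (X - C (x m)) ^ 2) ^ k)
    simpa only [eval_pow, eval_sub, eval_one, eval_mul, eval_C, eval_X, inv_mul_eq_div] using this
  have hlim : Tendsto (fun k : ℕ => ∑' n, c n * q n ^ k) atTop
      (𝓝 (∑' n, if n = m then c n else 0)) := by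
    refine tendsto_tsum_of_dominated_convergence hc.abs (fun n => ?_) (Eventually.of_forall
      fun k n => ?_)
    · by_cases hn : n = m
      · simp [hn, q]
      · simpa [hn] using (tendsto_pow_atTop_nhds_zero_of_lt_one (hq_nonneg n)
          (hq_lt_one n hn)).const_mul (c n)
    · rw [Real.norm_eq_abs, abs_mul, abs_of_nonneg (pow_nonneg (hq_nonneg n) k)]
      exact mul_le_of_le_one_right (abs_nonneg _) (pow_le_one₀ (hq_nonneg n) (hq_le_one n))
  simp_rw [hzero, tsum_ite_eq] at hlim
  exact tendsto_nhds_unique hlim tendsto_const_nhds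

end Moments

theorem eq_zero_of_tsum_mul_exp_eq_zero {ι : Type*} {c ν : ι → ℝ} (hc : Summable c)
    (hν : BddAbove (Set.range ν)) (hinj : Function.Injective ν)
    (h : ∀ k : ℕ, ∑' n, c n * Real.exp (ν n * k) = 0) : c = 0 := by
  obtain ⟨M, hM⟩ := hν
  have hνM : ∀ n, ν n ≤ M := fun n => hM ⟨n, rfl⟩
  refine eq_zero_of_tsum_mul_pow_eq_zero (x := fun n => Real.exp (ν n - M)) (R := 1) hc
    (fun n => ?_) (fun a b hab => ?_) (fun k => ?_)
  · rw [abs_of_pos (Real.exp_pos _), Real.exp_le_one_iff]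
    linarith [hνM n]
  · exact hinj (by simpa using Real.exp_injective hab)
  · have hshift : ∀ n, c n * Real.exp (ν n - M) ^ k =
        Real.exp (-(M * k)) * (c n * Real.exp (ν n * k)) := fun n => by
      rw [← Real.exp_nat_mul, mul_left_comm, ← Real.exp_add]; ring_nf
    rw [tsum_congr hshift, tsum_mul_left, h k, mul_zero]

section HilbertBasis

variable {ι E : Type*} [NormedAddCommGroup E] [InnerProductSpace ℝ E]

lemma HilbertBasis.summable_sum_inner_mul_inner {κ : ℕ → Type*} [∀ n, Fintype (κ n)]
    (b : HilbertBasis (Σ n, κ n) ℝ E) (x y : E) :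
    Summable fun n => ∑ j, ⟪x, b ⟨n, j⟩⟫ * ⟪b ⟨n, j⟩, y⟫ := by
  simpa only [tsum_fintype] using (b.summable_inner_mul_inner x y).sigma

variable [CompleteSpace E]

lemma HilbertBasis.summable_mul_inner_smul (b : HilbertBasis ι ℝ E) {w : ι → ℝ} {C : ℝ}
    (hw : ∀ i, |w i| ≤ C) (x : E) : Summable fun i => (w i * ⟪x, b i⟫) • b i := by
  refine (b.orthonormal.orthogonalFamily.summable_iff_norm_sq_summable
    fun i => w i * ⟪x, b i⟫).mpr ?_
  refine ((b.orthonormal.inner_products_summable (x := x)).mul_left (C ^ 2)).of_nonneg_of_le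
    (fun i => sq_nonneg _) fun i => ?_
  rw [norm_mul, mul_pow, real_inner_comm]
  exact mul_le_mul_of_nonneg_right (pow_le_pow_left₀ (norm_nonneg _) (hw i) 2) (sq_nonneg _)

lemma HilbertBasis.hasSum_mul_inner_mul_inner (b : HilbertBasis ι ℝ E) {w : ι → ℝ} {C : ℝ}
    (hw : ∀ i, |w i| ≤ C) (x y : E) :
    HasSum (fun i => w i * (⟪x, b i⟫ * ⟪b i, y⟫)) ⟪∑' i, (w i * ⟪x, b i⟫) • b i, y⟫ := by
  have := ((b.summable_mul_inner_smul hw x).hasSum).mapL (innerSL ℝ y)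
  simpa [real_inner_comm y, real_inner_smul_left, mul_assoc] using this

lemma HilbertBasis.inner_tsum_sigma_mul_inner_smul {κ : ℕ → Type*} [∀ n, Fintype (κ n)]
    (b : HilbertBasis (Σ n, κ n) ℝ E) {w : ℕ → ℝ} {C : ℝ} (hw : ∀ n, |w n| ≤ C) (x y : E) :
    ⟪∑' i : Σ n, κ n, (w i.1 * ⟪x, b i⟫) • b i, y⟫ =
      ∑' n, w n * ∑ j, ⟪x, b ⟨n, j⟩⟫ * ⟪b ⟨n, j⟩, y⟫ := by
  rw [← (b.hasSum_mul_inner_mul_inner (fun i => hw i.1) x y).tsum_eq,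
    (b.hasSum_mul_inner_mul_inner (fun i => hw i.1) x y).summable.tsum_sigma]
  simp_rw [tsum_fintype, Finset.mul_sum]

end HilbertBasis

/-- `B* S(t)* x = 0` for all `t ≥ 0` iff `⟪E(μ_n) x, g_i⟫ = 0`
for all `n` and `i`, where `S` is the self-adjoint diagonal semigroup and
`E n` the spectral projection onto the `n`-th eigenspace. -/
theorem kernel_iff_spectral_projections
    {Z : Type*} [NormedAddCommGroup Z] [InnerProductSpace ℝ Z] [CompleteSpace Z]
    (r : ℕ → ℕ) (φ : HilbertBasis (Σ n : ℕ, Fin (r n)) ℝ Z)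
    (μ : ℕ → ℝ) (hμ : BddAbove (Set.range μ)) (hdist : Function.Injective μ)
    (p : ℕ) (g : Fin p → Z)
    (S : ℝ → Z → Z)
    (hS : ∀ t x, S t x = ∑' (i : (Σ n : ℕ, Fin (r n))),
        (Real.exp (μ i.1 * t) * ⟪x, φ i⟫) • (φ i : Z))
    (E : ℕ → Z → Z)
    (hE : ∀ n x, E n x = ∑ j : Fin (r n), ⟪x, φ ⟨n, j⟩⟫ • (φ ⟨n, j⟩ : Z))
    (x : Z) :
    (∀ t : ℝ, 0 ≤ t → ∀ i : Fin p, ⟪S t x, g i⟫ = 0) ↔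
      (∀ n : ℕ, ∀ i : Fin p, ⟪E n x, g i⟫ = 0) := by
  have hE_inner : ∀ n i, ⟪E n x, g i⟫ = ∑ j, ⟪x, φ ⟨n, j⟩⟫ * ⟪φ ⟨n, j⟩, g i⟫ := fun n i => by
    simp only [hE, sum_inner, real_inner_smul_left]
  have hS_inner : ∀ t, 0 ≤ t → ∀ i, ⟪S t x, g i⟫ = ∑' n, ⟪E n x, g i⟫ * Real.exp (μ n * t) := by
    obtain ⟨M, hM⟩ := hμ
    intro t ht i
    have hbound : ∀ n, |Real.exp (μ n * t)| ≤ Real.exp (M * t) := fun n => by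
      rw [abs_of_pos (Real.exp_pos _), Real.exp_le_exp]
      exact mul_le_mul_of_nonneg_right (hM ⟨n, rfl⟩) ht
    simp_rw [hS, φ.inner_tsum_sigma_mul_inner_smul hbound, hE_inner, mul_comm]
  constructor
  · intro h n i
    have hsum : Summable fun n => ⟪E n x, g i⟫ := by
      simpa only [hE_inner] using φ.summable_sum_inner_mul_inner x (g i)
    refine congrFun (eq_zero_of_tsum_mul_exp_eq_zero hsum hμ hdist fun k => ?_) n
    rw [← hS_inner k k.cast_nonneg i, h k k.cast_nonneg i]
  · intro h t ht i
    simp only [hS_inner t ht i, h, zero_mul, tsum_zero]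
end

section
/- With the setting of the previous output formula, suppose there exist M, ω > 0 with ‖y(t)‖_{ℝ^q} ≤ M e^{-ωt}‖x_0‖ for all x_0 ∈ Z and t ≥ 0. If n_0 ∈ K satisfies μ_{n_0} ≥ 0 and the μ_n are pairwise distinct, then ⟨f_k, φ_{n_0 j}⟩ = 0 for all k = 1,…,q and j = 1,…,r_{n_0}; equivalently the observation matrix T_{n_0} = (⟨f_k, φ_{n_0 j}⟩)_{k,j} is zero, i.e., Im T_{n_0} = {0}. -/
open scoped RealInnerProductSpace
open Filter Topology

/-! The initial state `x₀ = φ_{n₀ j}` kills every other term of the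
modal expansion, leaving `e^{μ_{n₀} t} ⟨f_k, φ_{n₀ j}⟩`. Since `μ_{n₀} ≥ 0` this has modulus at
least `|⟨f_k, φ_{n₀ j}⟩|`, while the stability estimate forces it below `M e^{-ω t}`, which tends
to `0`. -/

theorem Orthonormal.tsum_mul_inner_mul {E ι : Type*} [NormedAddCommGroup E]
    [InnerProductSpace ℝ E] {ψ : ι → E} (hψ : Orthonormal ℝ ψ) (a b : ι → ℝ) (i₀ : ι) :
    ∑' i, a i * (⟪ψ i₀, ψ i⟫ * b i) = a i₀ * b i₀ := by
  rw [tsum_eq_single i₀ fun i hi => by rw [hψ.2 (Ne.symm hi), zero_mul, mul_zero]]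
  rw [real_inner_self_eq_norm_sq, hψ.1, one_pow, one_mul]

theorem eq_zero_of_abs_le_mul_exp_neg {c M ω : ℝ} (hω : 0 < ω)
    (h : ∀ t, 0 ≤ t → |c| ≤ M * Real.exp (-ω * t)) : c = 0 := by
  have hdecay : Tendsto (fun t => M * Real.exp (-ω * t)) atTop (𝓝 0) := by
    simpa [neg_mul] using
      (Real.tendsto_exp_neg_atTop_nhds_zero.comp (tendsto_id.const_mul_atTop hω)).const_mul M
  exact abs_nonpos_iff.mp <| ge_of_tendsto hdecay <| eventually_atTop.mpr ⟨0, h⟩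

theorem sensor_coeffs_vanish_of_output_stable_general
    {Z : Type*} [NormedAddCommGroup Z] [InnerProductSpace ℝ Z]
    (r : ℕ → ℕ) (φ : (Σ n : ℕ, Fin (r n)) → Z) (hφ : Orthonormal ℝ φ)
    (μ : ℕ → ℝ)
    (q : ℕ) (f : Fin q → Z) (K : Set ℕ)
    (y : Z → ℝ → EuclideanSpace ℝ (Fin q))
    (hy : ∀ x₀ t k, y x₀ t k = ∑' (i : (Σ n : K, Fin (r n))),
        Real.exp (μ i.1 * t) * (⟪x₀, φ ⟨i.1, i.2⟩⟫ * ⟪f k, φ ⟨i.1, i.2⟩⟫))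
    (M ω : ℝ) (hω : 0 < ω)
    (hstab : ∀ x₀ : Z, ∀ t : ℝ, 0 ≤ t → ‖y x₀ t‖ ≤ M * Real.exp (-ω * t) * ‖x₀‖)
    (n₀ : ℕ) (hn₀ : n₀ ∈ K) (hμn₀ : 0 ≤ μ n₀) :
    ∀ k : Fin q, ∀ j : Fin (r n₀), ⟪f k, φ ⟨n₀, j⟩⟫ = 0 := by
  intro k j
  have hK : Function.Injective fun i : Σ n : K, Fin (r n) => (⟨i.1, i.2⟩ : Σ n : ℕ, Fin (r n)) :=
    Subtype.val_injective.sigma_map (β₂ := fun n => Fin (r n)) fun _ => Function.injective_id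
  have hmode : ∀ t, y (φ ⟨n₀, j⟩) t k = Real.exp (μ n₀ * t) * ⟪f k, φ ⟨n₀, j⟩⟫ := fun t => by
    rw [hy]
    exact (hφ.comp _ hK).tsum_mul_inner_mul (fun i => Real.exp (μ i.1 * t))
      (fun i => ⟪f k, φ ⟨i.1, i.2⟩⟫) ⟨⟨n₀, hn₀⟩, j⟩
  refine eq_zero_of_abs_le_mul_exp_neg (M := M) hω fun t ht => ?_
  calc |⟪f k, φ ⟨n₀, j⟩⟫|
      ≤ Real.exp (μ n₀ * t) * |⟪f k, φ ⟨n₀, j⟩⟫| :=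
        le_mul_of_one_le_left (abs_nonneg _) (Real.one_le_exp (mul_nonneg hμn₀ ht))
    _ = ‖y (φ ⟨n₀, j⟩) t k‖ := by
        rw [hmode, Real.norm_eq_abs, abs_mul, abs_of_pos (Real.exp_pos _)]
    _ ≤ ‖y (φ ⟨n₀, j⟩) t‖ := PiLp.norm_apply_le _ k
    _ ≤ M * Real.exp (-ω * t) * ‖φ ⟨n₀, j⟩‖ := hstab _ t ht
    _ = M * Real.exp (-ω * t) := by rw [hφ.1, mul_one]

/-- necessity — if the output decays exponentially, uniformly in
`x₀`, and `n₀ ∈ K` has `μ_{n₀} ≥ 0`, then all sensor coefficients at mode `n₀`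
vanish, i.e. the observation matrix `T_{n₀}` is zero. -/
theorem sensor_coeffs_vanish_of_output_stable
    {Z : Type*} [NormedAddCommGroup Z] [InnerProductSpace ℝ Z] [CompleteSpace Z]
    (r : ℕ → ℕ) (φ : (Σ n : ℕ, Fin (r n)) → Z) (hφ : Orthonormal ℝ φ)
    (μ : ℕ → ℝ) (hdist : Function.Injective μ)
    (q : ℕ) (f : Fin q → Z) (K : Set ℕ)
    (y : Z → ℝ → EuclideanSpace ℝ (Fin q))
    (hy : ∀ x₀ t k, y x₀ t k = ∑' (i : (Σ n : K, Fin (r n))),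
        Real.exp (μ i.1 * t) * (⟪x₀, φ ⟨i.1, i.2⟩⟫ * ⟪f k, φ ⟨i.1, i.2⟩⟫))
    (M ω : ℝ) (hM : 0 < M) (hω : 0 < ω)
    (hstab : ∀ x₀ : Z, ∀ t : ℝ, 0 ≤ t → ‖y x₀ t‖ ≤ M * Real.exp (-ω * t) * ‖x₀‖)
    (n₀ : ℕ) (hn₀ : n₀ ∈ K) (hμn₀ : 0 ≤ μ n₀) :
    ∀ k : Fin q, ∀ j : Fin (r n₀), ⟪f k, φ ⟨n₀, j⟩⟫ = 0 :=
  sensor_coeffs_vanish_of_output_stable_general r φ hφ μ q f K y hy M ω hω hstab n₀ hn₀ hμn₀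
end

section
/- Therefore (Proposition 3.3, combined form): with orthonormal modes (φ_{nj}), distinct eigenvalues μ_n with μ_n → -∞, actuator matrices B_n = (⟨g_i, φ_{nj}⟩)_{i,j} ∈ ℝ^{p×r_n} and sensor matrices T_n = (⟨f_k, φ_{nj}⟩)_{k,j} ∈ ℝ^{q×r_n}, and K = { n : Im T_n ≠ {0} and ker B_n* ≠ {0} }, the output y(t) defined by y_k(t) = Σ_{n∈K} e^{μ_n t} Σ_j ⟨x_0,φ_{nj}⟩⟨f_k,φ_{nj}⟩ is exponentially stable uniformly in x_0 (i.e., ∃ M, ω > 0 with ‖y(t)‖ ≤ M e^{-ωt}‖x_0‖ for all x_0) if and only if μ_n < 0 for all n ∈ K and sup_{n∈K} μ_n < 0. -/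
open scoped RealInnerProductSpace

lemma myAux.abs_mul_summable {ι : Type*} {a b : ι → ℝ}
    (ha : Summable fun i => a i ^ 2) (hb : Summable fun i => b i ^ 2) :
    Summable fun i => |a i * b i| := by
  refine Summable.of_nonneg_of_le (fun i => abs_nonneg _) (fun i => ?_)
    ((ha.add hb).div_const 2)
  rw [abs_mul]
  nlinarith [sq_nonneg (|a i| - |b i|), sq_abs (a i), sq_abs (b i)]

lemma myAux.tsum_abs_mul_le {ι : Type*} {a b : ι → ℝ}
    (ha : Summable fun i => a i ^ 2) (hb : Summable fun i => b i ^ 2) :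
    ∑' i, |a i * b i| ≤ Real.sqrt (∑' i, a i ^ 2) * Real.sqrt (∑' i, b i ^ 2) := by
  refine Summable.tsum_le_of_sum_le (myAux.abs_mul_summable ha hb) fun s => ?_
  rw [← Real.sqrt_mul (tsum_nonneg fun i => sq_nonneg _),
    Real.le_sqrt (Finset.sum_nonneg fun i _ => abs_nonneg _)
      (mul_nonneg (tsum_nonneg fun i => sq_nonneg _) (tsum_nonneg fun i => sq_nonneg _))]
  calc (∑ i ∈ s, |a i * b i|) ^ 2 = (∑ i ∈ s, |a i| * |b i|) ^ 2 := by
        simp only [abs_mul]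
    _ ≤ (∑ i ∈ s, |a i| ^ 2) * ∑ i ∈ s, |b i| ^ 2 :=
        Finset.sum_mul_sq_le_sq_mul_sq s _ _
    _ ≤ (∑' i, a i ^ 2) * ∑' i, b i ^ 2 := by
        simp only [sq_abs]
        exact mul_le_mul (Summable.sum_le_tsum s (fun i _ => sq_nonneg _) ha)
          (Summable.sum_le_tsum s (fun i _ => sq_nonneg _) hb)
          (Finset.sum_nonneg fun i _ => sq_nonneg _)
          (tsum_nonneg fun i => sq_nonneg _)

lemma myAux.exp_bound_le {a ω M c : ℝ} (hc : 0 < c)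
    (h : ∀ t : ℝ, 0 ≤ t → c * Real.exp (a * t) ≤ M * Real.exp (-ω * t)) : a ≤ -ω := by
  by_contra hlt
  push_neg at hlt
  have hpos : 0 < a + ω := by linarith
  have h2 : ∀ t : ℝ, 0 ≤ t → Real.exp ((a + ω) * t) ≤ M / c := by
    intro t ht
    have h1 := mul_le_mul_of_nonneg_right (h t ht) (Real.exp_pos (ω * t)).le
    rw [mul_assoc, ← Real.exp_add, mul_assoc, ← Real.exp_add] at h1
    have e1 : a * t + ω * t = (a + ω) * t := by ring
    rw [e1] at h1
    have e2 : -ω * t + ω * t = 0 := by ring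
    rw [e2, Real.exp_zero, mul_one] at h1
    rw [le_div_iff₀ hc, mul_comm]
    exact h1
  have htend : Filter.Tendsto (fun t : ℝ => Real.exp ((a + ω) * t))
      Filter.atTop Filter.atTop :=
    Real.tendsto_exp_atTop.comp (Filter.Tendsto.const_mul_atTop hpos Filter.tendsto_id)
  obtain ⟨t, ht0, htgt⟩ :=
    ((htend.eventually_gt_atTop (M / c)).and (Filter.eventually_ge_atTop 0)).exists
  exact absurd (h2 t htgt) (not_le.mpr ht0)

lemma myAux.coord_le_norm {q : ℕ} (x : EuclideanSpace ℝ (Fin q)) (k : Fin q) :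
    |x k| ≤ ‖x‖ := by
  rw [EuclideanSpace.norm_eq]
  have h : |x k| = Real.sqrt (‖x k‖ ^ 2) := by
    rw [Real.sqrt_sq (norm_nonneg _), Real.norm_eq_abs]
  rw [h]
  exact Real.sqrt_le_sqrt
    (Finset.single_le_sum (fun i _ => sq_nonneg (‖x i‖)) (Finset.mem_univ k))

/-- Proposition 3.3, combined form: with actuator matrices
`B n` and sensor matrices `T n`, and
`K = { n | Im T_n ≠ {0} ∧ ker B_n* ≠ {0} }`, the output is exponentially
stable uniformly in `x₀` iff `μ n < 0` for all `n ∈ K` and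
`sup_{n ∈ K} μ n < 0`. -/
theorem output_stabilizable_iff
    {Z : Type*} [NormedAddCommGroup Z] [InnerProductSpace ℝ Z] [CompleteSpace Z]
    (r : ℕ → ℕ) (φ : HilbertBasis (Σ n : ℕ, Fin (r n)) ℝ Z)
    (μ : ℕ → ℝ) (hdist : Function.Injective μ)
    (hμtop : Filter.Tendsto μ Filter.atTop Filter.atBot)
    (p q : ℕ) (g : Fin p → Z) (f : Fin q → Z)
    (B : ∀ n : ℕ, Matrix (Fin p) (Fin (r n)) ℝ)
    (hB : ∀ n i j, B n i j = ⟪g i, φ ⟨n, j⟩⟫)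
    (T : ∀ n : ℕ, Matrix (Fin q) (Fin (r n)) ℝ)
    (hT : ∀ n k j, T n k j = ⟪f k, φ ⟨n, j⟩⟫)
    (K : Set ℕ)
    (hK : K = {n : ℕ | T n ≠ 0 ∧ ∃ v : Fin (r n) → ℝ, v ≠ 0 ∧ Matrix.mulVec (B n) v = 0})
    (hsum : ∀ k : Fin q,
      Summable fun i : (Σ n : K, Fin (r n)) => ⟪f k, φ ⟨i.1, i.2⟩⟫ ^ 2)
    (y : Z → ℝ → EuclideanSpace ℝ (Fin q))
    (hy : ∀ x₀ t k, y x₀ t k = ∑' (i : (Σ n : K, Fin (r n))),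
        Real.exp (μ i.1 * t) * (⟪x₀, φ ⟨i.1, i.2⟩⟫ * ⟪f k, φ ⟨i.1, i.2⟩⟫)) :
    (∃ M : ℝ, 0 < M ∧ ∃ ω : ℝ, 0 < ω ∧
        ∀ x₀ : Z, ∀ t : ℝ, 0 ≤ t → ‖y x₀ t‖ ≤ M * Real.exp (-ω * t) * ‖x₀‖) ↔
      ((∀ n ∈ K, μ n < 0) ∧ ∃ σ : ℝ, 0 < σ ∧ ∀ n ∈ K, μ n ≤ -σ) := by
  have einj : Function.Injective
      (fun i : Σ n : K, Fin (r n) => (⟨(i.1 : ℕ), i.2⟩ : Σ n : ℕ, Fin (r n))) := by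
    rintro ⟨⟨n, hn⟩, j⟩ ⟨⟨m, hm⟩, j'⟩ h
    simp only [Sigma.mk.inj_iff] at h
    obtain ⟨rfl, h2⟩ := h
    rw [eq_of_heq h2]
  have hfunext : ∀ x₀ : Z, (fun i : Σ n : ℕ, Fin (r n) => ⟪x₀, φ i⟫ ^ 2)
      = fun i => ⟪x₀, φ i⟫ * ⟪φ i, x₀⟫ := by
    intro x₀; funext i; rw [real_inner_comm (φ i) x₀, sq]
  have hfull : ∀ x₀ : Z, Summable fun i : Σ n : ℕ, Fin (r n) => ⟪x₀, φ i⟫ ^ 2 := by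
    intro x₀; rw [hfunext x₀]; exact φ.summable_inner_mul_inner x₀ x₀
  have hfulsum : ∀ x₀ : Z, ∑' i : Σ n : ℕ, Fin (r n), ⟪x₀, φ i⟫ ^ 2 = ‖x₀‖ ^ 2 := by
    intro x₀
    rw [hfunext x₀, φ.tsum_inner_mul_inner x₀ x₀, real_inner_self_eq_norm_sq]
  have hb2 : ∀ x₀ : Z,
      Summable fun i : Σ n : K, Fin (r n) => ⟪x₀, φ ⟨i.1, i.2⟩⟫ ^ 2 := fun x₀ =>
    (hfull x₀).comp_injective einj
  have hbes : ∀ x₀ : Z,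
      ∑' i : Σ n : K, Fin (r n), ⟪x₀, φ ⟨i.1, i.2⟩⟫ ^ 2 ≤ ‖x₀‖ ^ 2 := by
    intro x₀
    rw [← hfulsum x₀]
    exact Summable.tsum_le_tsum_of_inj _ einj (fun c _ => sq_nonneg _) (fun i => le_rfl)
      (hb2 x₀) (hfull x₀)
  constructor
  · rintro ⟨M, hM, ω, hω, hbound⟩
    have key : ∀ n ∈ K, μ n ≤ -ω := by
      intro n hn
      have hTn : T n ≠ 0 := (hK ▸ hn).1
      obtain ⟨k, j, hkj⟩ : ∃ k j, T n k j ≠ 0 := by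
        by_contra hcon
        push_neg at hcon
        exact hTn (by ext k j; simpa using hcon k j)
      have hc : ⟪f k, φ ⟨n, j⟩⟫ ≠ 0 := by rw [← hT n k j]; exact hkj
      have hnorm1 : ‖φ (⟨n, j⟩ : Σ n : ℕ, Fin (r n))‖ = 1 := φ.orthonormal.1 _
      have hycomp : ∀ t : ℝ,
          y (φ ⟨n, j⟩) t k = Real.exp (μ n * t) * ⟪f k, φ ⟨n, j⟩⟫ := by
        intro t
        rw [hy]
        rw [tsum_eq_single (⟨⟨n, hn⟩, j⟩ : Σ m : K, Fin (r m)) ?_]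
        · have h1 : ⟪φ (⟨n, j⟩ : Σ n : ℕ, Fin (r n)), φ ⟨n, j⟩⟫ = (1 : ℝ) := by
            rw [real_inner_self_eq_norm_sq, hnorm1]; norm_num
          simp only
          rw [h1, one_mul]
        · rintro ⟨⟨m, hm⟩, j'⟩ hne
          have hne' : (⟨n, j⟩ : Σ n : ℕ, Fin (r n)) ≠ ⟨m, j'⟩ := by
            intro he
            apply hne
            obtain ⟨rfl, h2⟩ := Sigma.mk.inj_iff.mp he.symm
            rw [eq_of_heq h2]
          have hz : ⟪φ (⟨n, j⟩ : Σ n : ℕ, Fin (r n)), φ ⟨m, j'⟩⟫ = (0 : ℝ) := by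
            rw [orthonormal_iff_ite.mp φ.orthonormal, if_neg hne']
          simp only
          rw [hz, zero_mul, mul_zero]
      refine myAux.exp_bound_le (M := M) (abs_pos.mpr hc) fun t ht => ?_
      have h1 := hbound (φ ⟨n, j⟩) t ht
      rw [hnorm1, mul_one] at h1
      calc |⟪f k, φ (⟨n, j⟩ : Σ n : ℕ, Fin (r n))⟫| * Real.exp (μ n * t)
          = |y (φ ⟨n, j⟩) t k| := by
            rw [hycomp t, abs_mul, abs_of_pos (Real.exp_pos _), mul_comm]
        _ ≤ ‖y (φ ⟨n, j⟩) t‖ := myAux.coord_le_norm _ k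
        _ ≤ M * Real.exp (-ω * t) := h1
    exact ⟨fun n hn => lt_of_le_of_lt (key n hn) (by linarith), ω, hω, key⟩
  · rintro ⟨hneg, σ, hσ, hσle⟩
    set S : ℝ := ∑ k : Fin q, ∑' i : Σ n : K, Fin (r n), ⟪f k, φ ⟨i.1, i.2⟩⟫ ^ 2 with hS
    have hS0 : 0 ≤ S :=
      Finset.sum_nonneg fun k _ => tsum_nonneg fun i => sq_nonneg _
    refine ⟨Real.sqrt S + 1, by positivity, σ, hσ, fun x₀ t ht => ?_⟩
    have hk : ∀ k : Fin q, |y x₀ t k| ≤ Real.exp (-σ * t) * ‖x₀‖ *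
        Real.sqrt (∑' i : Σ n : K, Fin (r n), ⟪f k, φ ⟨i.1, i.2⟩⟫ ^ 2) := by
      intro k
      rw [hy]
      have habs : ∀ i : Σ n : K, Fin (r n),
          |Real.exp (μ i.1 * t) * (⟪x₀, φ ⟨i.1, i.2⟩⟫ * ⟪f k, φ ⟨i.1, i.2⟩⟫)|
            ≤ Real.exp (-σ * t) * |⟪x₀, φ ⟨i.1, i.2⟩⟫ * ⟪f k, φ ⟨i.1, i.2⟩⟫| := by
        intro i
        rw [abs_mul, abs_of_pos (Real.exp_pos _)]
        refine mul_le_mul_of_nonneg_right ?_ (abs_nonneg _)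
        exact Real.exp_le_exp.mpr (mul_le_mul_of_nonneg_right (hσle i.1 i.1.2) ht)
      have hsummand : Summable fun i : Σ n : K, Fin (r n) =>
          |⟪x₀, φ ⟨i.1, i.2⟩⟫ * ⟪f k, φ ⟨i.1, i.2⟩⟫| :=
        myAux.abs_mul_summable (hb2 x₀) (hsum k)
      have hsummable : Summable fun i : Σ n : K, Fin (r n) =>
          ‖Real.exp (μ i.1 * t) * (⟪x₀, φ ⟨i.1, i.2⟩⟫ * ⟪f k, φ ⟨i.1, i.2⟩⟫)‖ := by
        refine Summable.of_nonneg_of_le (fun i => norm_nonneg _) (fun i => ?_)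
          (hsummand.mul_left (Real.exp (-σ * t)))
        rw [Real.norm_eq_abs]; exact habs i
      calc |∑' i : Σ n : K, Fin (r n),
              Real.exp (μ i.1 * t) * (⟪x₀, φ ⟨i.1, i.2⟩⟫ * ⟪f k, φ ⟨i.1, i.2⟩⟫)|
          ≤ ∑' i : Σ n : K, Fin (r n),
              ‖Real.exp (μ i.1 * t) * (⟪x₀, φ ⟨i.1, i.2⟩⟫ * ⟪f k, φ ⟨i.1, i.2⟩⟫)‖ := by
            rw [← Real.norm_eq_abs]
            exact norm_tsum_le_tsum_norm hsummable
        _ ≤ ∑' i : Σ n : K, Fin (r n),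
              Real.exp (-σ * t) * |⟪x₀, φ ⟨i.1, i.2⟩⟫ * ⟪f k, φ ⟨i.1, i.2⟩⟫| :=
            Summable.tsum_le_tsum (fun i => by rw [Real.norm_eq_abs]; exact habs i)
              hsummable (hsummand.mul_left _)
        _ = Real.exp (-σ * t) *
              ∑' i : Σ n : K, Fin (r n), |⟪x₀, φ ⟨i.1, i.2⟩⟫ * ⟪f k, φ ⟨i.1, i.2⟩⟫| :=
            tsum_mul_left
        _ ≤ Real.exp (-σ * t) *
              (Real.sqrt (∑' i : Σ n : K, Fin (r n), ⟪x₀, φ ⟨i.1, i.2⟩⟫ ^ 2) *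
               Real.sqrt (∑' i : Σ n : K, Fin (r n), ⟪f k, φ ⟨i.1, i.2⟩⟫ ^ 2)) :=
            mul_le_mul_of_nonneg_left (myAux.tsum_abs_mul_le (hb2 x₀) (hsum k))
              (Real.exp_pos _).le
        _ ≤ Real.exp (-σ * t) *
              (‖x₀‖ * Real.sqrt (∑' i : Σ n : K, Fin (r n), ⟪f k, φ ⟨i.1, i.2⟩⟫ ^ 2)) := by
            refine mul_le_mul_of_nonneg_left
              (mul_le_mul_of_nonneg_right ?_ (Real.sqrt_nonneg _)) (Real.exp_pos _).le
            calc Real.sqrt (∑' i : Σ n : K, Fin (r n), ⟪x₀, φ ⟨i.1, i.2⟩⟫ ^ 2)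
                ≤ Real.sqrt (‖x₀‖ ^ 2) := Real.sqrt_le_sqrt (hbes x₀)
              _ = ‖x₀‖ := Real.sqrt_sq (norm_nonneg _)
        _ = Real.exp (-σ * t) * ‖x₀‖ *
              Real.sqrt (∑' i : Σ n : K, Fin (r n), ⟪f k, φ ⟨i.1, i.2⟩⟫ ^ 2) := by ring
    calc ‖y x₀ t‖ = Real.sqrt (∑ k : Fin q, ‖y x₀ t k‖ ^ 2) := EuclideanSpace.norm_eq _
      _ ≤ Real.sqrt (∑ k : Fin q, (Real.exp (-σ * t) * ‖x₀‖) ^ 2 *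
            ∑' i : Σ n : K, Fin (r n), ⟪f k, φ ⟨i.1, i.2⟩⟫ ^ 2) := by
          refine Real.sqrt_le_sqrt (Finset.sum_le_sum fun k _ => ?_)
          have h1 : ‖y x₀ t k‖ ^ 2 = |y x₀ t k| ^ 2 := by rw [Real.norm_eq_abs]
          rw [h1]
          calc |y x₀ t k| ^ 2
              ≤ (Real.exp (-σ * t) * ‖x₀‖ *
                  Real.sqrt (∑' i : Σ n : K, Fin (r n), ⟪f k, φ ⟨i.1, i.2⟩⟫ ^ 2)) ^ 2 :=
                pow_le_pow_left₀ (abs_nonneg _) (hk k) 2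
            _ = (Real.exp (-σ * t) * ‖x₀‖) ^ 2 *
                  Real.sqrt (∑' i : Σ n : K, Fin (r n), ⟪f k, φ ⟨i.1, i.2⟩⟫ ^ 2) ^ 2 := by
                ring
            _ = (Real.exp (-σ * t) * ‖x₀‖) ^ 2 *
                  ∑' i : Σ n : K, Fin (r n), ⟪f k, φ ⟨i.1, i.2⟩⟫ ^ 2 := by
                rw [Real.sq_sqrt (tsum_nonneg fun i => sq_nonneg _)]
      _ = Real.sqrt ((Real.exp (-σ * t) * ‖x₀‖) ^ 2 * S) := by rw [← Finset.mul_sum]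
      _ = Real.exp (-σ * t) * ‖x₀‖ * Real.sqrt S := by
          rw [Real.sqrt_mul (sq_nonneg _), Real.sqrt_sq (by positivity)]
      _ ≤ (Real.sqrt S + 1) * Real.exp (-σ * t) * ‖x₀‖ := by
          nlinarith [Real.sqrt_nonneg S, (Real.exp_pos (-σ * t)).le, norm_nonneg x₀,
            mul_nonneg (Real.exp_pos (-σ * t)).le (norm_nonneg x₀)]
end

section
/- Let f : [0,∞) → ℝ be given by f(t) = Σ_{n=1}^∞ c_n e^{μ_n t} where μ_1 > μ_2 > … are strictly decreasing reals with μ_n → -∞ and Σ |c_n| e^{μ_n t} < ∞ for each t ≥ 0. If f(t) = 0 for all t ≥ 0, then c_n = 0 for all n. -/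
open Filter Topology Real

/-- uniqueness for generalized Dirichlet series. If
`μ` is strictly decreasing with `μ n → -∞`, the series
`f t = ∑' n, c n * e^{μ n t}` is absolutely convergent for each `t ≥ 0`,
and `f t = 0` for all `t ≥ 0`, then every coefficient `c n` vanishes. -/
theorem dirichlet_series_uniqueness
    (c μ : ℕ → ℝ) (hμ : StrictAnti μ)
    (hμtop : Filter.Tendsto μ Filter.atTop Filter.atBot)
    (habs : ∀ t : ℝ, 0 ≤ t → Summable fun n => |c n| * Real.exp (μ n * t))
    (f : ℝ → ℝ) (hf : ∀ t : ℝ, f t = ∑' n, c n * Real.exp (μ n * t))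
    (hzero : ∀ t : ℝ, 0 ≤ t → f t = 0) :
    ∀ n : ℕ, c n = 0 := by
  intro n
  induction n using Nat.strong_induction_on with
  | _ n ih =>
    have hS : ∀ t : ℝ, 0 ≤ t → Summable (fun k => c k * Real.exp (μ k * t)) := by
      intro t ht
      refine Summable.of_abs ?_
      simpa [abs_mul, abs_of_pos (Real.exp_pos _)] using habs t ht
    have htail : ∀ t : ℝ, 0 ≤ t → (∑' i, c (i + n) * Real.exp (μ (i + n) * t)) = 0 := by
      intro t ht
      have h1 := Summable.sum_add_tsum_nat_add n (hS t ht)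
      have h2 : (∑ i ∈ Finset.range n, c i * Real.exp (μ i * t)) = 0 := by
        refine Finset.sum_eq_zero fun i hi => ?_
        rw [ih i (Finset.mem_range.mp hi), zero_mul]
      have h3 : (∑' k, c k * Real.exp (μ k * t)) = 0 := by
        rw [← hf t, hzero t ht]
      rw [h2, h3, zero_add] at h1
      exact h1
    set d : ℕ → ℝ := fun i => μ (i + n) - μ n with hd
    have hd0 : d 0 = 0 := by simp [hd]
    have hdneg : ∀ i : ℕ, 0 < i → d i < 0 := fun i hi => sub_neg.mpr (hμ (by omega))
    have hdle : ∀ i, d i ≤ 0 := by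
      intro i
      rcases Nat.eq_zero_or_pos i with h | h
      · simp [h, hd0]
      · exact (hdneg i h).le
    have hbound : Summable (fun i => |c (i + n)| * Real.exp (d i)) := by
      have h2 : Summable (fun i => |c (i + n)| * Real.exp (μ (i + n) * 1)) :=
        (summable_nat_add_iff n).mpr (habs 1 zero_le_one)
      refine (h2.mul_right (Real.exp (μ n))⁻¹).congr fun i => ?_
      simp [hd, Real.exp_sub, div_eq_mul_inv, mul_assoc]
    have hlim : ∀ i : ℕ, Tendsto (fun t => c (i + n) * Real.exp (d i * t)) atTop
        (𝓝 (if i = 0 then c n else 0)) := by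
      intro i
      rcases Nat.eq_zero_or_pos i with h | h
      · subst h
        simpa [hd0] using tendsto_const_nhds (α := ℝ) (x := c n)
      · have h1 : Tendsto (fun t : ℝ => d i * t) atTop atBot :=
          Tendsto.const_mul_atTop_of_neg (hdneg i h) tendsto_id
        have h2 : Tendsto (fun t : ℝ => Real.exp (d i * t)) atTop (𝓝 0) :=
          Real.tendsto_exp_atBot.comp h1
        have := h2.const_mul (c (i + n))
        rw [mul_zero] at this
        simpa [Nat.pos_iff_ne_zero.mp h] using this
    have hb : ∀ᶠ t in atTop, ∀ i,
        ‖c (i + n) * Real.exp (d i * t)‖ ≤ |c (i + n)| * Real.exp (d i) := by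
      filter_upwards [eventually_ge_atTop (1 : ℝ)] with t ht i
      rw [norm_mul, Real.norm_eq_abs, Real.norm_eq_abs, abs_of_pos (Real.exp_pos _)]
      have hdt : d i * t ≤ d i := by
        calc d i * t ≤ d i * 1 := mul_le_mul_of_nonpos_left ht (hdle i)
        _ = d i := mul_one _
      exact mul_le_mul_of_nonneg_left (Real.exp_le_exp.mpr hdt) (abs_nonneg _)
    have hmain : Tendsto (fun t => ∑' i, c (i + n) * Real.exp (d i * t)) atTop (𝓝 (c n)) := by
      have := tendsto_tsum_of_dominated_convergence hbound hlim hb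
      simpa [tsum_ite_eq] using this
    have hz : Tendsto (fun t => ∑' i, c (i + n) * Real.exp (d i * t)) atTop (𝓝 0) := by
      have hzero' : ∀ᶠ t in atTop, (∑' i, c (i + n) * Real.exp (d i * t)) = 0 := by
        filter_upwards [eventually_ge_atTop (0 : ℝ)] with t ht
        have heq : (fun i => c (i + n) * Real.exp (d i * t)) =
            fun i => (c (i + n) * Real.exp (μ (i + n) * t)) * (Real.exp (μ n * t))⁻¹ := by
          funext i
          rw [hd]
          rw [sub_mul, Real.exp_sub]
          ring
        rw [heq, tsum_mul_right, htail t ht, zero_mul]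
      exact Tendsto.congr' (hzero'.mono fun t h => h.symm) tendsto_const_nhds
    exact tendsto_nhds_unique hmain hz
end
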